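/- Let Y = Q(v) with the pmf p_Q(y|v) = e^ε/Ω if ⟨y,v⟩ = 1 else 1/Ω, where v is a signed unit vector. Then E[Y | v] = p(1 − e^{−ε}) · v, where p = (1/Ω)·C(d−1, m−1)·2^{m−1}·e^ε. -/

import Mathlib

open Finset

/-- The output space `𝒴`: vectors in `{-1,0,1}^d` with exactly `m` nonzero entries. -/
def outputSet (d m : ℕ) : Finset (Fin d → ℤ) :=
  (Fintype.piFinset fun _ : Fin d => ({-1, 0, 1} : Finset ℤ)).filter
    (fun y => (Finset.univ.filter fun i => y i ≠ 0).card = m)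

/-- `v` is a signed unit vector: exactly one nonzero entry, which is `1` or `-1`. -/
def IsSignedUnit {d : ℕ} (v : Fin d → ℤ) : Prop :=
  ∃ k : Fin d, (v k = 1 ∨ v k = -1) ∧ ∀ i, i ≠ k → v i = 0

/-- The pmf of the randomizer: `p_Q(y|v) = e^ε/Ω` if `⟨y,v⟩ = 1` and `1/Ω` otherwise. -/
noncomputable def pQ (d : ℕ) (ε Ω : ℝ) (v y : Fin d → ℤ) : ℝ :=
  if (∑ i, y i * v i) = 1 then Real.exp ε / Ω else 1 / Ω

/-- The normalizing constant `Ω`. -/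
noncomputable def Ωval (d m : ℕ) (ε : ℝ) : ℝ :=
  ((d - 1).choose (m - 1) : ℝ) * 2 ^ (m - 1) * Real.exp ε
    + ((d - 1).choose (m - 1) : ℝ) * 2 ^ (m - 1) + ((d - 1).choose m : ℝ) * 2 ^ m

/-!
At a coordinate `k` where `v` vanishes, flipping the sign of `y k` is an involution of `𝒴` that
preserves `p_Q(y|v)`, so the contributions of `y` and its flip cancel. At the coordinate `j`
with `v j = σ = ±1`, `p_Q(y|v) = 1/Ω + (e^ε - 1)/Ω · [y j = σ]`: the constant part cancels by
the same flip, and the rest counts the `C(d-1, m-1) · 2^(m-1)` outputs with `y j = σ` (choose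
the other `m - 1` support points, then their signs).
-/

section

variable {d m : ℕ}

def flipAt (k : Fin d) (y : Fin d → ℤ) : Fin d → ℤ :=
  Function.update y k (-y k)

@[simp] lemma flipAt_apply_self (k : Fin d) (y : Fin d → ℤ) : flipAt k y k = -y k := by
  simp [flipAt]

lemma flipAt_apply_of_ne {k i : Fin d} (h : i ≠ k) (y : Fin d → ℤ) : flipAt k y i = y i :=
  Function.update_of_ne h _ _

@[simp] lemma flipAt_flipAt (k : Fin d) (y : Fin d → ℤ) : flipAt k (flipAt k y) = y := by
  simp [flipAt]

lemma flipAt_mem_outputSet {k : Fin d} {y : Fin d → ℤ} (hy : y ∈ outputSet d m) :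
    flipAt k y ∈ outputSet d m := by
  simp only [outputSet, mem_filter, Fintype.mem_piFinset, mem_insert, mem_singleton] at hy ⊢
  obtain ⟨hvals, hcard⟩ := hy
  refine ⟨fun i => ?_, ?_⟩
  · rcases eq_or_ne i k with rfl | hik
    · simp only [flipAt_apply_self]; grind
    · rw [flipAt_apply_of_ne hik]; exact hvals i
  · rw [← hcard]
    congr 1
    refine filter_congr fun i _ => ?_
    rcases eq_or_ne i k with rfl | hik
    · simp
    · rw [flipAt_apply_of_ne hik]

lemma sum_outputSet_mul_apply_eq_zero (k : Fin d) {f : (Fin d → ℤ) → ℝ}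
    (hf : ∀ y, f (flipAt k y) = f y) :
    ∑ y ∈ outputSet d m, f y * (y k : ℝ) = 0 := by
  refine sum_involution (fun y _ => flipAt k y) (fun y _ => ?_) (fun y _ hy => ?_)
    (fun _ hy => flipAt_mem_outputSet hy) (fun y _ => flipAt_flipAt k y)
  · rw [hf, flipAt_apply_self, Int.cast_neg]; ring
  · intro h
    have := congrFun h k
    simp only [flipAt_apply_self] at this
    have : y k = 0 := by omega
    simp [this] at hy

lemma card_filter_mem_powersetCard_succ {α : Type*} [DecidableEq α] (s : Finset α) {a : α}
    (ha : a ∈ s) (n : ℕ) : #{A ∈ powersetCard (n + 1) s | a ∈ A} = (#s - 1).choose n := by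
  rw [← card_erase_of_mem ha, ← card_powersetCard]
  refine card_nbij' (fun A => A.erase a) (insert a) (fun A hA => ?_) (fun B hB => ?_)
    (fun A hA => insert_erase (mem_filter.1 hA).2) (fun B hB => erase_insert ?_)
  · simp only [coe_filter, mem_powersetCard, Set.mem_ofPred_eq] at hA ⊢
    grind
  · simp only [coe_filter, mem_powersetCard, Set.mem_ofPred_eq, mem_coe] at hB ⊢
    grind
  · simp only [mem_coe, mem_powersetCard] at hB
    exact fun h => by simpa using hB.1 h

def signBox (j : Fin d) (c : ℤ) (A : Finset (Fin d)) (i : Fin d) : Finset ℤ :=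
  if i = j then {c} else if i ∈ A then {-1, 1} else {0}

lemma card_piFinset_signBox {j : Fin d} {A : Finset (Fin d)} (hj : j ∈ A) (c : ℤ) :
    #(Fintype.piFinset (signBox j c A)) = 2 ^ (#A - 1) := by
  rw [Fintype.card_piFinset, ← card_erase_of_mem hj, ← prod_const, ← univ_inter (A.erase j),
    ← prod_ite_mem]
  refine prod_congr rfl fun i _ => ?_
  by_cases hij : i = j
  · simp [signBox, hij]
  · by_cases hiA : i ∈ A <;> simp [signBox, hij, hiA]

lemma filter_outputSet_eq_piFinset_signBox {j : Fin d} {c : ℤ} (hc : c = 1 ∨ c = -1)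
    {A : Finset (Fin d)} (hj : j ∈ A) (hA : #A = m) :
    {y ∈ outputSet d m | y j = c ∧ ({i | y i ≠ 0} : Finset (Fin d)) = A}
      = Fintype.piFinset (signBox j c A) := by
  ext y
  simp only [outputSet, mem_filter, Fintype.mem_piFinset, signBox]
  constructor
  · rintro ⟨⟨hvals, -⟩, rfl, rfl⟩ i
    have := hvals i
    simp only [mem_insert, mem_singleton] at this
    split_ifs with hij hi
    · simp [hij]
    · simp only [mem_filter, mem_univ, true_and] at hi
      simp only [mem_insert, mem_singleton]
      omega
    · simpa using hi
  · intro hy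
    have hsupp : ({i | y i ≠ 0} : Finset (Fin d)) = A := by
      ext i
      have := hy i
      simp only [mem_filter, mem_univ, true_and]
      split_ifs at this with hij hi <;> simp only [mem_insert, mem_singleton] at this <;> grind
    refine ⟨⟨fun i => ?_, by rw [hsupp, hA]⟩, by simpa using hy j, hsupp⟩
    have := hy i
    split_ifs at this <;> simp only [mem_insert, mem_singleton] at this ⊢ <;> omega

lemma card_filter_outputSet_apply_eq {j : Fin d} {c : ℤ} (hc : c = 1 ∨ c = -1) (n : ℕ) :
    #{y ∈ outputSet d (n + 1) | y j = c} = (d - 1).choose n * 2 ^ n := by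
  have hsupp : ∀ y ∈ {y ∈ outputSet d (n + 1) | y j = c},
      ({i | y i ≠ 0} : Finset (Fin d))
        ∈ {A ∈ powersetCard (n + 1) (univ : Finset (Fin d)) | j ∈ A} := by
    intro y hy
    simp only [outputSet, mem_filter] at hy
    simp only [mem_filter, mem_powersetCard, subset_univ, true_and, mem_univ, hy]
    grind
  have hfiber : ∀ A ∈ {A ∈ powersetCard (n + 1) (univ : Finset (Fin d)) | j ∈ A},
      #{y ∈ {y ∈ outputSet d (n + 1) | y j = c} | ({i | y i ≠ 0} : Finset (Fin d)) = A}
        = 2 ^ n := by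
    intro A hA
    obtain ⟨hAcard, hjA⟩ : #A = n + 1 ∧ j ∈ A := by simpa using hA
    rw [filter_filter, filter_outputSet_eq_piFinset_signBox hc hjA hAcard,
      card_piFinset_signBox hjA, hAcard, Nat.add_sub_cancel]
  rw [card_eq_sum_card_fiberwise hsupp, sum_congr rfl hfiber, sum_const, smul_eq_mul,
    card_filter_mem_powersetCard_succ univ (mem_univ j), card_univ, Fintype.card_fin]

lemma pQ_flipAt {v : Fin d → ℤ} {k : Fin d} (hvk : v k = 0) (ε Ω : ℝ) (y : Fin d → ℤ) :
    pQ d ε Ω v (flipAt k y) = pQ d ε Ω v y := by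
  have hinner : ∑ i, flipAt k y i * v i = ∑ i, y i * v i := by
    refine sum_congr rfl fun i _ => ?_
    rcases eq_or_ne i k with rfl | hik
    · simp [hvk]
    · rw [flipAt_apply_of_ne hik]
  simp only [pQ, hinner]

lemma pQ_eq_ite {v : Fin d → ℤ} {j : Fin d} (hvj : v j = 1 ∨ v j = -1)
    (hvz : ∀ i, i ≠ j → v i = 0) (ε Ω : ℝ) (y : Fin d → ℤ) :
    pQ d ε Ω v y = if y j = v j then Real.exp ε / Ω else 1 / Ω := by
  have hinner : ∑ i, y i * v i = y j * v j :=
    sum_eq_single j (fun i _ hij => by rw [hvz i hij, mul_zero]) (by simp)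
  have hiff : y j * v j = 1 ↔ y j = v j := by rcases hvj with h | h <;> rw [h] <;> omega
  simp only [pQ, hinner, hiff]

lemma sum_pQ_mul_apply_self {v : Fin d → ℤ} {j : Fin d} (hvj : v j = 1 ∨ v j = -1)
    (hvz : ∀ i, i ≠ j → v i = 0) (ε Ω : ℝ) (n : ℕ) :
    ∑ y ∈ outputSet d (n + 1), pQ d ε Ω v y * (y j : ℝ)
      = (d - 1).choose n * 2 ^ n * ((Real.exp ε - 1) / Ω) * v j := by
  have hsplit : ∀ y : Fin d → ℤ, pQ d ε Ω v y * (y j : ℝ)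
      = 1 / Ω * (y j : ℝ) + if y j = v j then (Real.exp ε - 1) / Ω * v j else 0 := by
    intro y
    rw [pQ_eq_ite hvj hvz]
    split_ifs with h
    · rw [h]; ring
    · ring
  rw [sum_congr rfl fun y _ => hsplit y, sum_add_distrib,
    sum_outputSet_mul_apply_eq_zero (f := fun _ => 1 / Ω) j fun _ => rfl, ← sum_filter,
    sum_const, card_filter_outputSet_apply_eq hvj, nsmul_eq_mul]
  push_cast
  ring

end

theorem expectation_pQ_general (d m : ℕ) (hm1 : 1 ≤ m)
    (ε : ℝ) (v : Fin d → ℤ) (hv : IsSignedUnit v) (k : Fin d) :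
    (∑ y ∈ outputSet d m, pQ d ε (Ωval d m ε) v y * (y k : ℝ))
      = ((1 / Ωval d m ε) * ((d - 1).choose (m - 1) : ℝ) * 2 ^ (m - 1) * Real.exp ε)
          * (1 - Real.exp (-ε)) * (v k : ℝ) := by
  obtain ⟨j, hvj, hvz⟩ := hv
  obtain ⟨n, rfl⟩ := Nat.exists_eq_add_of_le' hm1
  rcases eq_or_ne k j with rfl | hkj
  · rw [sum_pQ_mul_apply_self hvj hvz, Nat.add_sub_cancel, Real.exp_neg]
    have hexp : Real.exp ε * (Real.exp ε)⁻¹ = 1 := mul_inv_cancel₀ (Real.exp_pos ε).ne'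
    linear_combination ((d - 1).choose n * 2 ^ n * (v k : ℝ) / Ωval d (n + 1) ε) * hexp
  · rw [sum_outputSet_mul_apply_eq_zero k (pQ_flipAt (hvz k hkj) _ _), hvz k hkj]
    simp

/-- The expectation of the randomizer output is `E[Y | v] = p(1 - e^{-ε})·v`, where
`p = (1/Ω)·C(d-1,m-1)·2^{m-1}·e^ε`. -/
theorem expectation_pQ (d m : ℕ) (hd : 1 ≤ d) (hm1 : 1 ≤ m) (hmd : m ≤ d)
    (ε : ℝ) (hε : 0 < ε) (v : Fin d → ℤ) (hv : IsSignedUnit v) (k : Fin d) :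
    (∑ y ∈ outputSet d m, pQ d ε (Ωval d m ε) v y * (y k : ℝ))
      = ((1 / Ωval d m ε) * ((d - 1).choose (m - 1) : ℝ) * 2 ^ (m - 1) * Real.exp ε)
          * (1 - Real.exp (-ε)) * (v k : ℝ) :=
  expectation_pQ_general d m hm1 ε v hv k
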